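/- For a persistence module with rank function d^{i,j} = dim Im f^{i,j} (extended by 0 for out-of-range indices), if for all 0 ≤ i ≤ j ≤ N one has d^{i,j} = Σ_{a ≤ i, j ≤ b} m(a,b) for some function m : intervals → ℕ, then necessarily m(i,j) = d^{i,j} - d^{i-1,j} - d^{i,j+1} + d^{i-1,j+1} for all 0 ≤ i ≤ j ≤ N. -/

import Mathlib

open Module

/-- The composite structure map `f^{i,i+k} : V i → V (i+k)` of a persistence module,
with `f^{i,i} = id`. -/
noncomputable def pcomp {F : Type*} [Field F] {V : ℕ → Type*} [∀ i, AddCommGroup (V i)]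
    [∀ i, Module F (V i)] (f : ∀ i, V i →ₗ[F] V (i + 1)) (i : ℕ) :
    ∀ k, V i →ₗ[F] V (i + k)
  | 0 => LinearMap.id
  | (k + 1) => f (i + k) ∘ₗ pcomp f i k

/-- The rank function `d^{i,j} = dim Im f^{i,j}` of a persistence module `V₀ → ... → V_N`,
extended by `0` for out-of-range indices. -/
noncomputable def prank {F : Type*} [Field F] {V : ℕ → Type*} [∀ i, AddCommGroup (V i)]
    [∀ i, Module F (V i)] (N : ℕ) (f : ∀ i, V i →ₗ[F] V (i + 1)) (i j : ℤ) : ℕ :=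
  if 0 ≤ i ∧ i ≤ j ∧ j ≤ N then
    finrank F (LinearMap.range (pcomp f i.toNat (j - i).toNat))
  else 0

/-!
Write `S(i,j)` (`barcodeCount`) for the number of bars `[a,b]` with `0 ≤ a ≤ i` and `j ≤ b ≤ N`, i.e. the sum of `m`
over a rectangle of intervals. Peeling off the row `a = i` and then the column `b = j` shows that the
alternating sum `S(i,j) - S(i-1,j) - S(i,j+1) + S(i-1,j+1)` is the single term `m(i,j)`. The
hypothesis gives `d = S` on `0 ≤ i ≤ j ≤ N`, and both vanish when `i = -1` or `j = N + 1`, where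
the rectangle is empty and `d` is extended by `0`; so `d` may be replaced by `S` in the formula.
-/

open Finset

section BarcodeCount

variable {M : Type*} [AddCommMonoid M]

noncomputable def barcodeCount (m : ℤ → ℤ → M) (N i j : ℤ) : M :=
  ∑ a ∈ Icc 0 i, ∑ b ∈ Icc j N, m a b

variable (m : ℤ → ℤ → M) {N i j : ℤ}

lemma barcodeCount_of_neg (hi : i < 0) : barcodeCount m N i j = 0 := by
  simp [barcodeCount, Icc_eq_empty_of_lt hi]

lemma barcodeCount_of_gt (hj : N < j) : barcodeCount m N i j = 0 := by
  simp [barcodeCount, Icc_eq_empty_of_lt hj]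

lemma barcodeCount_eq_sub_one_add (hi : 0 ≤ i) :
    barcodeCount m N i j = barcodeCount m N (i - 1) j + ∑ b ∈ Icc j N, m i b := by
  rw [barcodeCount, ← insert_Icc_sub_one_right_eq_Icc hi, sum_insert (by simp), add_comm]
  rfl

lemma sum_Icc_eq_add_sum_Icc_add_one (g : ℤ → M) (hj : j ≤ N) :
    ∑ b ∈ Icc j N, g b = g j + ∑ b ∈ Icc (j + 1) N, g b := by
  rw [← insert_Icc_add_one_left_eq_Icc hj, sum_insert (by simp)]

/-- Inclusion–exclusion, stated without subtraction so that it holds in any additive monoid. -/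
lemma barcodeCount_add_eq_add (hi : 0 ≤ i) (hj : j ≤ N) :
    barcodeCount m N i j + barcodeCount m N (i - 1) (j + 1) =
      m i j + barcodeCount m N (i - 1) j + barcodeCount m N i (j + 1) := by
  rw [barcodeCount_eq_sub_one_add m hi, barcodeCount_eq_sub_one_add (j := j + 1) m hi,
    sum_Icc_eq_add_sum_Icc_add_one _ hj]
  abel

end BarcodeCount

section RankFunction

variable {F : Type*} [Field F] {V : ℕ → Type*} [∀ i, AddCommGroup (V i)] [∀ i, Module F (V i)]
  {N : ℕ} {f : ∀ i, V i →ₗ[F] V (i + 1)} {i j : ℤ}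

lemma prank_of_neg (hi : i < 0) : prank N f i j = 0 :=
  if_neg fun h => hi.not_ge h.1

lemma prank_of_gt (hj : (N : ℤ) < j) : prank N f i j = 0 :=
  if_neg fun h => hj.not_ge h.2.2

lemma prank_eq_barcodeCount {m : ℤ → ℤ → ℕ}
    (hm : ∀ i j : ℤ, 0 ≤ i → i ≤ j → j ≤ N → prank N f i j = barcodeCount m N i j)
    (hij : i ≤ j) :
    prank N f i j = barcodeCount m N i j := by
  rcases lt_or_ge i 0 with hi' | hi'
  · rw [prank_of_neg hi', barcodeCount_of_neg m hi']
  rcases lt_or_ge (N : ℤ) j with hj' | hj'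
  · rw [prank_of_gt hj', barcodeCount_of_gt m hj']
  exact hm i j hi' hij hj'

end RankFunction

theorem persistence_barcode_multiplicity_formula_general {F : Type*} [Field F] {V : ℕ → Type*}
    [∀ i, AddCommGroup (V i)] [∀ i, Module F (V i)]
    (N : ℕ) (f : ∀ i, V i →ₗ[F] V (i + 1)) (m : ℤ → ℤ → ℕ)
    (hm : ∀ i j : ℤ, 0 ≤ i → i ≤ j → j ≤ N →
      prank N f i j = ∑ a ∈ Finset.Icc 0 i, ∑ b ∈ Finset.Icc j (N : ℤ), m a b) :
    ∀ i j : ℤ, 0 ≤ i → i ≤ j → j ≤ N →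
      (m i j : ℤ) = (prank N f i j : ℤ) - (prank N f (i - 1) j : ℤ)
        - (prank N f i (j + 1) : ℤ) + (prank N f (i - 1) (j + 1) : ℤ) := by
  intro i j hi hij hj
  have hd (a b : ℤ) (hab : a ≤ b) := prank_eq_barcodeCount (i := a) (j := b) hm hab
  rw [hd i j hij, hd (i - 1) j (by omega), hd i (j + 1) (by omega), hd (i - 1) (j + 1) (by omega)]
  have := barcodeCount_add_eq_add m hi hj
  omega

/-- **Uniqueness of barcode multiplicities.** If `m` is a multiset of intervals whose
counting function reproduces the rank function `d^{i,j}` of a persistence module, then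
necessarily `m(i,j) = d^{i,j} - d^{i-1,j} - d^{i,j+1} + d^{i-1,j+1}` on the range
`0 ≤ i ≤ j ≤ N`. -/
theorem persistence_barcode_multiplicity_formula {F : Type*} [Field F] {V : ℕ → Type*}
    [∀ i, AddCommGroup (V i)] [∀ i, Module F (V i)] [∀ i, FiniteDimensional F (V i)]
    (N : ℕ) (f : ∀ i, V i →ₗ[F] V (i + 1)) (m : ℤ → ℤ → ℕ)
    (hm : ∀ i j : ℤ, 0 ≤ i → i ≤ j → j ≤ N →
      prank N f i j = ∑ a ∈ Finset.Icc 0 i, ∑ b ∈ Finset.Icc j (N : ℤ), m a b) :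
    ∀ i j : ℤ, 0 ≤ i → i ≤ j → j ≤ N →
      (m i j : ℤ) = (prank N f i j : ℤ) - (prank N f (i - 1) j : ℤ)
        - (prank N f i (j + 1) : ℤ) + (prank N f (i - 1) (j + 1) : ℤ) :=
  persistence_barcode_multiplicity_formula_general N f m hm
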